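/- Let q > 1 be a real number, 0 < δ < 1, r ≥ 2 an integer, and let p = (p_1, p_2, …) be a real sequence with |p_n| < δ^n/q^n for all n ≥ 1. Then the partial derivative ∂_r c_1^{(q)}(p) exists and ∂_r c_1^{(q)}(p) = s_r(q) · ( q(q − 1) c_1^{(q)}(p) − q² p_1 − 1 ) / ( r q (q − 1)(1 + p_r) ). -/

import Mathlib

/-- `s_1(q) = q + 1` and `s_n(q) = ∑_{d ∣ n} μ(n/d) q^d` for `n ≠ 1`.
(For `n = 0` the sum over divisors is empty, so `sFun q 0 = 0`.) -/
noncomputable def sFun (q : ℝ) (n : ℕ) : ℝ :=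
  if n = 1 then q + 1
  else ∑ d ∈ n.divisors, (ArithmeticFunction.moebius (n / d) : ℝ) * q ^ d

/-- `M_n(q) = (1/n) ∑_{d ∣ n} μ(n/d) q^d`; so `M_1(q) = q` and `M_n(q) = s_n(q)/n` for `n ≥ 2`. -/
noncomputable def MFun (q : ℝ) (n : ℕ) : ℝ :=
  (1 / (n : ℝ)) * ∑ d ∈ n.divisors, (ArithmeticFunction.moebius (n / d) : ℝ) * q ^ d

/-- `H_q(p) = ∏_{n ≥ 1} (1 + p_n)^{M_n(q)}`, a product of real powers (`Real.rpow`).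
The `n = 0` factor is `(1 + p 0) ^ (0 : ℝ) = 1`, so the product effectively runs over `n ≥ 1`. -/
noncomputable def Hfun (q : ℝ) (p : ℕ → ℝ) : ℝ :=
  ∏' n : ℕ, (1 + p n) ^ (MFun q n)

/-- `c_1^{(q)}(p) = q·p_1/(q − 1) − (H_q(p) − 1)/(q(q − 1))`. -/
noncomputable def c1Fun (q : ℝ) (p : ℕ → ℝ) : ℝ :=
  q * p 1 / (q - 1) - (Hfun q p - 1) / (q * (q - 1))

/-! Where `1 + p_n > 0` and `∑ M_n(q) log (1 + p_n)` converges absolutely (here because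
`|M_n(q)| ≤ q^n` while `|p_n| ≤ δ^n / q^n`), `H_q(p)` is the exponential of that sum. Changing
`p_r` changes only its `r`-th term, so `∂_r H_q = H_q · M_r(q) / (1 + p_r)`. For `r ≠ 1`, `c_1`
depends on `p_r` only through `H_q`, and `s_r = r M_r` together with
`q(q − 1) c_1 − q² p_1 − 1 = −H_q` gives the formula. -/

open Real Function

lemma MFun_zero (q : ℝ) : MFun q 0 = 0 := by
  simp [MFun]

lemma sFun_eq_mul_MFun (q : ℝ) {n : ℕ} (hn : n ≠ 1) : sFun q n = n * MFun q n := by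
  rcases eq_or_ne n 0 with rfl | hn0
  · simp [sFun, MFun]
  · rw [sFun, if_neg hn, MFun]
    field_simp

lemma abs_moebius_mul_pow_le {q : ℝ} (hq : 1 ≤ q) {n d : ℕ} (hd : d ∈ n.divisors) :
    |(ArithmeticFunction.moebius (n / d) : ℝ) * q ^ d| ≤ q ^ n := by
  have hμ : |(ArithmeticFunction.moebius (n / d) : ℝ)| ≤ 1 := by
    exact_mod_cast ArithmeticFunction.abs_moebius_le_one
  rw [abs_mul, abs_of_nonneg (by positivity : (0 : ℝ) ≤ q ^ d)]
  calc |(ArithmeticFunction.moebius (n / d) : ℝ)| * q ^ d ≤ 1 * q ^ n :=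
        mul_le_mul hμ (pow_le_pow_right₀ hq (Nat.divisor_le hd)) (by positivity) zero_le_one
    _ = q ^ n := one_mul _

lemma abs_MFun_le {q : ℝ} (hq : 1 ≤ q) (n : ℕ) : |MFun q n| ≤ q ^ n := by
  rcases Nat.eq_zero_or_pos n with rfl | hn
  · simp [MFun_zero]
  have hsum : |∑ d ∈ n.divisors, (ArithmeticFunction.moebius (n / d) : ℝ) * q ^ d|
      ≤ n * q ^ n :=
    calc _ ≤ ∑ d ∈ n.divisors, |(ArithmeticFunction.moebius (n / d) : ℝ) * q ^ d| :=
          Finset.abs_sum_le_sum_abs _ _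
      _ ≤ ∑ _d ∈ n.divisors, q ^ n := Finset.sum_le_sum fun _ hd => abs_moebius_mul_pow_le hq hd
      _ = n.divisors.card * q ^ n := by rw [Finset.sum_const, nsmul_eq_mul]
      _ ≤ n * q ^ n := by
          gcongr
          exact_mod_cast Nat.card_divisors_le_self n
  have hn' : (0 : ℝ) < n := by exact_mod_cast hn
  rw [MFun, abs_mul, abs_of_pos (by positivity : (0 : ℝ) < 1 / n), one_div_mul_eq_div,
    div_le_iff₀' hn']
  exact hsum

lemma abs_log_one_add_le {x : ℝ} (hx : |x| < 1) : |log (1 + x)| ≤ |x| / (1 - |x|) := by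
  simpa [sub_eq_add_neg] using abs_log_sub_add_sum_range_le (x := -x) (by rwa [abs_neg]) 0

lemma pow_div_pow_le_self {q δ : ℝ} (hq : 1 ≤ q) (hδ0 : 0 ≤ δ) (hδ1 : δ ≤ 1) {n : ℕ}
    (hn : 1 ≤ n) : δ ^ n / q ^ n ≤ δ :=
  calc δ ^ n / q ^ n ≤ δ ^ n := div_le_self (by positivity) (one_le_pow₀ hq)
    _ ≤ δ := pow_le_of_le_one hδ0 hδ1 (by omega)

lemma summable_MFun_mul_log {q δ : ℝ} (hq : 1 ≤ q) (hδ0 : 0 ≤ δ) (hδ1 : δ < 1) {p : ℕ → ℝ}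
    (hp : ∀ n, 1 ≤ n → |p n| ≤ δ ^ n / q ^ n) :
    Summable fun n => MFun q n * log (1 + p n) := by
  refine Summable.of_norm_bounded ((summable_geometric_of_lt_one hδ0 hδ1).div_const (1 - δ))
    fun n => ?_
  rcases Nat.eq_zero_or_pos n with rfl | hn
  · simp only [MFun_zero, zero_mul, norm_zero]
    exact div_nonneg (by positivity) (by linarith)
  have hpδ : |p n| ≤ δ := (hp n hn).trans (pow_div_pow_le_self hq hδ0 hδ1.le hn)
  have hlog : |log (1 + p n)| ≤ δ ^ n / q ^ n / (1 - δ) :=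
    (abs_log_one_add_le (by linarith)).trans
      (div_le_div₀ (by positivity) (hp n hn) (by linarith) (by linarith))
  have hqn : 0 < q ^ n := by positivity
  calc ‖MFun q n * log (1 + p n)‖ = |MFun q n| * |log (1 + p n)| := by
        rw [Real.norm_eq_abs, abs_mul]
    _ ≤ q ^ n * (δ ^ n / q ^ n / (1 - δ)) := by
        gcongr
        · exact abs_MFun_le hq n
    _ = δ ^ n / (1 - δ) := by field_simp

lemma Hfun_eq_exp_tsum {q : ℝ} {p : ℕ → ℝ} (hp : ∀ n, 1 ≤ n → 0 < 1 + p n)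
    (hs : Summable fun n => MFun q n * log (1 + p n)) :
    Hfun q p = exp (∑' n, MFun q n * log (1 + p n)) := by
  have hfactor : ∀ n, (1 + p n) ^ MFun q n = exp (MFun q n * log (1 + p n)) := by
    intro n
    rcases Nat.eq_zero_or_pos n with rfl | hn
    · simp [MFun_zero]
    · rw [rpow_def_of_pos (hp n hn), mul_comm]
  rw [Hfun, tprod_congr hfactor]
  exact hs.hasSum.rexp.tprod_eq

lemma hasDerivAt_Hfun_update {q : ℝ} {p : ℕ → ℝ} {r : ℕ} (hr : 1 ≤ r)
    (hp : ∀ n, 1 ≤ n → 0 < 1 + p n) (hs : Summable fun n => MFun q n * log (1 + p n)) :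
    HasDerivAt (fun t => Hfun q (update p r t)) (Hfun q p * (MFun q r / (1 + p r))) (p r) := by
  set g : ℕ → ℝ := fun n => MFun q n * log (1 + p n) with hg
  have hupdate : ∀ t, (fun n => MFun q n * log (1 + update p r t n))
      = update g r (MFun q r * log (1 + t)) := by
    intro t
    ext n
    rcases eq_or_ne n r with rfl | hne
    · simp
    · simp [hg, hne]
  have hformula : ∀ t, -1 < t →
      Hfun q (update p r t) = exp (MFun q r * log (1 + t) - g r + ∑' n, g n) := by
    intro t ht
    have hpos : ∀ n, 1 ≤ n → 0 < 1 + update p r t n := by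
      intro n hn
      rcases eq_or_ne n r with rfl | hne
      · simp only [update_self]; linarith
      · simpa [hne] using hp n hn
    rw [Hfun_eq_exp_tsum hpos (by rw [hupdate]; exact hs.update r _), hupdate,
      (hs.hasSum.update r _).tsum_eq]
  have hpr : 0 < 1 + p r := hp r hr
  have hderiv := (((((hasDerivAt_id' (p r)).const_add 1).log hpr.ne').const_mul
    (MFun q r)).sub_const (g r)).add_const (∑' n, g n) |>.exp
  have hvalue : MFun q r * log (1 + p r) - g r + ∑' n, g n = ∑' n, g n := by
    simp [hg]
  rw [hvalue, ← Hfun_eq_exp_tsum hp hs, mul_one_div] at hderiv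
  refine hderiv.congr_of_eventuallyEq ?_
  filter_upwards [Ioi_mem_nhds (show -1 < p r by linarith)] with t ht using hformula t ht

lemma hasDerivAt_c1Fun_update {q D : ℝ} {p : ℕ → ℝ} {r : ℕ} (hr : r ≠ 1)
    (hH : HasDerivAt (fun t => Hfun q (update p r t)) D (p r)) :
    HasDerivAt (fun t => c1Fun q (update p r t)) (-(D / (q * (q - 1)))) (p r) := by
  have := ((hH.sub_const 1).div_const (q * (q - 1))).const_sub (q * p 1 / (q - 1))
  simpa [c1Fun, update_of_ne (Ne.symm hr)] using this

lemma mul_c1Fun_sub_eq_neg_Hfun {q : ℝ} (hq0 : q ≠ 0) (hq1 : q ≠ 1) (p : ℕ → ℝ) :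
    q * (q - 1) * c1Fun q p - q ^ 2 * p 1 - 1 = -Hfun q p := by
  have : q - 1 ≠ 0 := sub_ne_zero.mpr hq1
  rw [c1Fun]
  field_simp
  ring

/-- For `q > 1`, `0 < δ < 1`, an integer `r ≥ 2` and `|p_n| < δ^n/q^n` for all `n ≥ 1`,
the partial derivative `∂_r c_1^{(q)}(p)` (the derivative at `t = p_r` of `t ↦ c_1^{(q)}`
of `p` with `r`-th entry replaced by `t`) exists and equals
`s_r(q) · (q(q − 1)·c_1^{(q)}(p) − q²·p_1 − 1) / (r·q·(q − 1)·(1 + p_r))`. -/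
theorem deriv_c1_higher_variable (q δ : ℝ) (hq : 1 < q) (hδ0 : 0 < δ) (hδ1 : δ < 1)
    (r : ℕ) (hr : 2 ≤ r)
    (p : ℕ → ℝ) (hp : ∀ n : ℕ, 1 ≤ n → |p n| < δ ^ n / q ^ n) :
    ∃ D : ℝ,
      HasDerivAt (fun t : ℝ => c1Fun q (Function.update p r t)) D (p r) ∧
      D = sFun q r * (q * (q - 1) * c1Fun q p - q ^ 2 * p 1 - 1)
            / ((r : ℝ) * q * (q - 1) * (1 + p r)) := by
  have hpos : ∀ n, 1 ≤ n → 0 < 1 + p n := fun n hn => by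
    have := (hp n hn).trans_le (pow_div_pow_le_self hq.le hδ0.le hδ1.le hn)
    linarith [neg_abs_le (p n)]
  have hs := summable_MFun_mul_log hq.le hδ0.le hδ1 fun n hn => (hp n hn).le
  refine ⟨_, hasDerivAt_c1Fun_update (by omega) (hasDerivAt_Hfun_update (by omega) hpos hs), ?_⟩
  have hq1 : q - 1 ≠ 0 := by linarith
  have hr0 : (r : ℝ) ≠ 0 := by positivity
  have hpr := (hpos r (by omega)).ne'
  rw [mul_c1Fun_sub_eq_neg_Hfun (by positivity) hq.ne', sFun_eq_mul_MFun q (by omega)]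
  field_simp
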